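/- Let n ≡ 1 (mod 4) and let H = {e_i : 1 ≤ i ≤ n} ∪ {ē_i : 1 ≤ i ≤ n} ⊆ (ℤ/2ℤ)^n, where e_i is the i-th standard basis vector and ē_i = (1,…,1) + e_i. Then H has cardinality 2n and (H, (ℤ/2ℤ)^n) is a multiplicative pair with respect to the octonion-type twisting function f_O. -/
import Mathlib

/-- The real sign `(−1)^ε` of an element `ε ∈ ℤ/2ℤ`. -/
def sgn (ε : ZMod 2) : ℝ := if ε = 0 then 1 else -1

/-- The octonion-type twisting function on `(ℤ/2ℤ)^n`. -/
def fO (n : ℕ) (x y : Fin n → ZMod 2) : ZMod 2 :=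
  (∑ k : Fin n, ∑ j ∈ Finset.Iio k, ∑ i ∈ Finset.Iio j,
      (x i * x j * y k + x i * y j * x k + y i * x j * x k)) +
  ∑ j : Fin n, ∑ i ∈ Finset.Iic j, x i * y j

/-- `(A, B)` is a multiplicative pair with respect to the twisting function `f`. -/
def IsMultiplicativePair (n : ℕ)
    (f : (Fin n → ZMod 2) → (Fin n → ZMod 2) → ZMod 2)
    (A B : Finset (Fin n → ZMod 2)) : Prop :=
  ∀ (a b : (Fin n → ZMod 2) → ℝ),
    (∑ x ∈ A, a x ^ 2) * (∑ y ∈ B, b y ^ 2) =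
      ∑ z : Fin n → ZMod 2,
        (∑ x ∈ A, ∑ y ∈ B, if x + y = z then sgn (f x y) * a x * b y else 0) ^ 2

/-- `e_i`: the `i`-th standard basis vector of `(ℤ/2ℤ)^n`. -/
def eVec (n : ℕ) (i : Fin n) : Fin n → ZMod 2 := fun j => if j = i then 1 else 0

/-- `ē_i = (1,…,1) + e_i`: the vector with `0` in position `i` and `1` elsewhere. -/
def eBarVec (n : ℕ) (i : Fin n) : Fin n → ZMod 2 := fun j => if j = i then 0 else 1

open Finset

lemma zmod2_natCast (N : ℕ) : (N : ZMod 2) = ((N % 2 : ℕ) : ZMod 2) := by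
  rw [ZMod.natCast_mod]
lemma zmod2_cast_one {N : ℕ} (h : N % 2 = 1) : (N : ZMod 2) = 1 := by
  rw [zmod2_natCast, h]; norm_num
lemma zmod2_cast_zero {N : ℕ} (h : N % 2 = 0) : (N : ZMod 2) = 0 := by
  rw [zmod2_natCast, h]; norm_num
lemma zmod2_add_self (v : ZMod 2) : v + v = 0 := by revert v; decide
lemma zmod2_cases (c : ZMod 2) : c = 0 ∨ c = 1 := by revert c; decide

lemma sgn_zero : sgn 0 = 1 := by norm_num [sgn]

lemma sgn_one : sgn 1 = -1 := by
  have h : (1 : ZMod 2) ≠ 0 := by decide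
  simp [sgn, h]

lemma sgn_mul_sgn (a b : ZMod 2) : sgn a * sgn b = sgn (a + b) := by
  rcases zmod2_cases a with ha | ha <;> rcases zmod2_cases b with hb | hb <;>
    subst ha <;> subst hb <;>
    simp [sgn_zero, sgn_one, show ((1 : ZMod 2) + 1) = 0 from rfl]

lemma sgn_add_one (a : ZMod 2) : sgn (a + 1) = -sgn a := by
  rcases zmod2_cases a with ha | ha <;> subst ha <;>
    simp [sgn_zero, sgn_one, show ((1 : ZMod 2) + 1) = 0 from rfl]

lemma sgn_sq (a : ZMod 2) : sgn a * sgn a = 1 := by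
  rw [sgn_mul_sgn, zmod2_add_self, sgn_zero]

variable {n : ℕ} {M : Type*} [AddCommMonoid M]

lemma Iio_filter (k : Fin n) : Iio k = univ.filter (fun j => j < k) := by ext j; simp
lemma Ioi_filter (k : Fin n) : Ioi k = univ.filter (fun j => k < j) := by ext j; simp
lemma Ici_filter (k : Fin n) : Ici k = univ.filter (fun j => k ≤ j) := by ext j; simp
lemma Ioo_filter (q p : Fin n) : Ioo q p = univ.filter (fun j => q < j ∧ j < p) := by ext j; simp

lemma swap1 (F : Fin n → Fin n → M) :
    ∑ k : Fin n, ∑ j ∈ Iio k, F j k = ∑ j : Fin n, ∑ k ∈ Ioi j, F j k := by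
  calc ∑ k : Fin n, ∑ j ∈ Iio k, F j k
      = ∑ k : Fin n, ∑ j : Fin n, if j < k then F j k else 0 := by
        refine sum_congr rfl fun k _ => ?_; rw [Iio_filter, sum_filter]
    _ = ∑ j : Fin n, ∑ k : Fin n, if j < k then F j k else 0 := sum_comm
    _ = ∑ j : Fin n, ∑ k ∈ Ioi j, F j k := by
        refine sum_congr rfl fun j _ => ?_; rw [Ioi_filter, sum_filter]

lemma swap2 (K : Fin n) (F : Fin n → Fin n → M) :
    ∑ j ∈ Iio K, ∑ i ∈ Iio j, F i j = ∑ i ∈ Iio K, ∑ j ∈ Ioo i K, F i j := by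
  have L : ∑ j ∈ Iio K, ∑ i ∈ Iio j, F i j
      = ∑ j : Fin n, ∑ i : Fin n, if i < j ∧ j < K then F i j else 0 := by
    rw [Iio_filter, sum_filter]
    refine sum_congr rfl fun j _ => ?_
    split_ifs with h
    · rw [Iio_filter, sum_filter]
      exact sum_congr rfl fun i _ => by simp [h]
    · exact (sum_eq_zero fun i _ => by simp [h]).symm
  have R : ∑ i ∈ Iio K, ∑ j ∈ Ioo i K, F i j
      = ∑ i : Fin n, ∑ j : Fin n, if i < j ∧ j < K then F i j else 0 := by
    rw [Iio_filter, sum_filter]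
    refine sum_congr rfl fun i _ => ?_
    split_ifs with h
    · rw [Ioo_filter, sum_filter]
    · refine (sum_eq_zero fun j _ => ?_).symm
      rw [if_neg]; rintro ⟨h1, h2⟩; exact h (h1.trans h2)
  rw [L, R, sum_comm]

def cub (n : ℕ) (x d : Fin n → ZMod 2) : ZMod 2 :=
  ∑ k : Fin n, ∑ j ∈ Iio k, ∑ i ∈ Iio j,
    (x i * x j * d k + x i * d j * x k + d i * x j * x k)
def quad (n : ℕ) (x d : Fin n → ZMod 2) : ZMod 2 := ∑ j : Fin n, ∑ i ∈ Iic j, x i * d j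

lemma fO_eq (x d : Fin n → ZMod 2) : fO n x d = cub n x d + quad n x d := rfl

lemma sum_Iio_Ioi (t : Fin n) (d : Fin n → ZMod 2) :
    ∑ c ∈ Iio t, d c + ∑ c ∈ Ioi t, d c = (∑ c, d c) + d t := by
  have ht : d t = ∑ c : Fin n, if c = t then d c else 0 := by
    rw [Finset.sum_ite_eq' univ t d]; simp
  rw [Iio_filter, sum_filter, Ioi_filter, sum_filter, ht, ← Finset.sum_add_distrib,
    ← Finset.sum_add_distrib]
  refine Finset.sum_congr rfl fun c _ => ?_
  rcases lt_trichotomy c t with h | h | h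
  · simp [h, lt_asymm h, h.ne]
  · subst h; simp [zmod2_add_self]
  · simp [h, lt_asymm h, h.ne']

lemma sum_three_intervals {q p : Fin n} (hqp : q < p) (d : Fin n → ZMod 2) :
    ∑ c ∈ Iio q, d c + ∑ c ∈ Ioo q p, d c + ∑ c ∈ Ioi p, d c = (∑ c, d c) + d q + d p := by
  have hq : d q = ∑ c : Fin n, if c = q then d c else 0 := by
    rw [Finset.sum_ite_eq' univ q d]; simp
  have hp : d p = ∑ c : Fin n, if c = p then d c else 0 := by
    rw [Finset.sum_ite_eq' univ p d]; simp
  rw [Iio_filter, sum_filter, Ioo_filter, sum_filter, Ioi_filter, sum_filter, hq, hp,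
    ← Finset.sum_add_distrib, ← Finset.sum_add_distrib, ← Finset.sum_add_distrib,
    ← Finset.sum_add_distrib]
  refine Finset.sum_congr rfl fun c _ => ?_
  by_cases h1 : c < q
  · have hcp : c < p := h1.trans hqp
    simp [h1, h1.ne, lt_asymm h1, hcp, hcp.ne, lt_asymm hcp]
  by_cases h2 : c = q
  · subst h2; simp [lt_irrefl, hqp, lt_asymm hqp, hqp.ne, zmod2_add_self]
  by_cases h3 : c < p
  · have hqc : q < c := lt_of_le_of_ne (not_lt.mp h1) (Ne.symm h2)
    simp [h1, h2, h3, hqc, lt_asymm h3, h3.ne, lt_asymm hqc]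
  by_cases h4 : c = p
  · subst h4; simp [h1, h2, lt_irrefl, hqp, zmod2_add_self, lt_asymm hqp]
  · have hpc : p < c := lt_of_le_of_ne (not_lt.mp h3) (Ne.symm h4)
    simp [h1, h2, h3, h4, hpc]

lemma cub_eq (x d : Fin n → ZMod 2) :
    cub n x d = ∑ p : Fin n, ∑ q ∈ Iio p, x q * x p * ((∑ c, d c) + d q + d p) := by
  have T1 : (∑ k : Fin n, ∑ j ∈ Iio k, ∑ i ∈ Iio j, x i * x j * d k)
      = ∑ p : Fin n, ∑ q ∈ Iio p, x q * x p * ∑ c ∈ Ioi p, d c := by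
    rw [swap1 (fun j k => ∑ i ∈ Iio j, x i * x j * d k)]
    refine sum_congr rfl fun p _ => ?_
    rw [Finset.sum_comm]
    refine sum_congr rfl fun q _ => ?_
    rw [Finset.mul_sum]
  have T2 : (∑ k : Fin n, ∑ j ∈ Iio k, ∑ i ∈ Iio j, x i * d j * x k)
      = ∑ p : Fin n, ∑ q ∈ Iio p, x q * x p * ∑ c ∈ Ioo q p, d c := by
    refine sum_congr rfl fun p _ => ?_
    rw [swap2 p (fun i j => x i * d j * x p)]
    refine sum_congr rfl fun q _ => ?_
    rw [Finset.mul_sum]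
    exact sum_congr rfl fun c _ => by ring
  have T3 : (∑ k : Fin n, ∑ j ∈ Iio k, ∑ i ∈ Iio j, d i * x j * x k)
      = ∑ p : Fin n, ∑ q ∈ Iio p, x q * x p * ∑ c ∈ Iio q, d c := by
    refine sum_congr rfl fun p _ => ?_
    refine sum_congr rfl fun q _ => ?_
    rw [Finset.mul_sum]
    exact sum_congr rfl fun c _ => by ring
  calc cub n x d
      = (∑ k : Fin n, ∑ j ∈ Iio k, ∑ i ∈ Iio j, x i * x j * d k)
        + (∑ k : Fin n, ∑ j ∈ Iio k, ∑ i ∈ Iio j, x i * d j * x k)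
        + (∑ k : Fin n, ∑ j ∈ Iio k, ∑ i ∈ Iio j, d i * x j * x k) := by
        unfold cub; simp only [Finset.sum_add_distrib]
    _ = ∑ p : Fin n, ∑ q ∈ Iio p,
          (x q * x p * ∑ c ∈ Ioi p, d c + x q * x p * ∑ c ∈ Ioo q p, d c
            + x q * x p * ∑ c ∈ Iio q, d c) := by
        rw [T1, T2, T3]; simp only [Finset.sum_add_distrib]
    _ = ∑ p : Fin n, ∑ q ∈ Iio p, x q * x p * ((∑ c, d c) + d q + d p) := by
        refine sum_congr rfl fun p _ => sum_congr rfl fun q hq => ?_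
        rw [← mul_add, ← mul_add, ← sum_three_intervals (mem_Iio.mp hq) d]
        ring

lemma eVec_mul_eVec {q p : Fin n} (t : Fin n) (hne : q ≠ p) :
    eVec n t q * eVec n t p = 0 := by
  by_cases h1 : q = t <;> by_cases h2 : p = t
  · exact absurd (h1.trans h2.symm) hne
  · simp [eVec, h2]
  · simp [eVec, h1]
  · simp [eVec, h1]

lemma sum_eVec_mul (s : Finset (Fin n)) (t : Fin n) (g : Fin n → ZMod 2) :
    ∑ k ∈ s, eVec n t k * g k = if t ∈ s then g t else 0 := by
  have h : ∀ k, eVec n t k * g k = if k = t then g k else 0 := by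
    intro k; simp [eVec, ite_mul]
  simp_rw [h]
  exact Finset.sum_ite_eq' s t g

lemma sum_eVec (s : Finset (Fin n)) (t : Fin n) :
    ∑ k ∈ s, eVec n t k = if t ∈ s then 1 else 0 := by
  simpa using sum_eVec_mul s t (fun _ => 1)

lemma eBar_apply (t k : Fin n) : eBarVec n t k = 1 + eVec n t k := by
  simp only [eVec, eBarVec]
  split_ifs <;> decide

lemma cub_eVec (t : Fin n) (d : Fin n → ZMod 2) : cub n (eVec n t) d = 0 := by
  rw [cub_eq]
  refine sum_eq_zero fun p _ => sum_eq_zero fun q hq => ?_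
  rw [eVec_mul_eVec t (ne_of_lt (mem_Iio.mp hq)), zero_mul]

lemma cub_eBar (hn : n % 4 = 1) (t : Fin n) (d : Fin n → ZMod 2) :
    cub n (eBarVec n t) d = (∑ c, d c) + d t := by
  have hn2 : (n - 1) % 2 = 0 := by omega
  obtain ⟨m, hm⟩ : ∃ m, n = 4 * m + 1 := ⟨n / 4, by omega⟩
  have hvalsum : (∑ p : Fin n, (p : ℕ)) % 2 = 0 := by
    have h1 : ∑ p : Fin n, (p : ℕ) = ∑ i ∈ range n, i :=
      Fin.sum_univ_eq_sum_range (fun i => i) n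
    have h2 : (∑ i ∈ range n, i) * 2 = n * (n - 1) := Finset.sum_range_id_mul_two n
    have h3 : n * (n - 1) = 4 * (m * (4 * m)) + 4 * m := by
      subst hm
      have h4 : 4 * m + 1 - 1 = 4 * m := rfl
      rw [h4]; ring
    omega
  rw [cub_eq]
  have key : ∀ p : Fin n, ∀ q ∈ Iio p,
      eBarVec n t q * eBarVec n t p * ((∑ c, d c) + d q + d p)
        = ((∑ c, d c) + d q + d p)
          + (eVec n t q * ((∑ c, d c) + d q + d p)
            + eVec n t p * ((∑ c, d c) + d q + d p)) := by
    intro p q hq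
    have h0 := eVec_mul_eVec t (ne_of_lt (mem_Iio.mp hq)) (n := n)
    rw [eBar_apply, eBar_apply]
    linear_combination ((∑ c, d c) + d q + d p) * h0
  rw [sum_congr rfl fun p _ => sum_congr rfl (key p)]
  have P1 : (∑ p : Fin n, ∑ q ∈ Iio p, ((∑ c, d c) + d q + d p)) = 0 := by
    have e1 : ∀ p : Fin n, ∑ q ∈ Iio p, ((∑ c, d c) + d q + d p)
        = ((p : ℕ) : ZMod 2) * ((∑ c, d c) + d p) + ∑ q ∈ Iio p, d q := by
      intro p
      calc ∑ q ∈ Iio p, ((∑ c, d c) + d q + d p)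
          = ∑ q ∈ Iio p, (((∑ c, d c) + d p) + d q) := sum_congr rfl fun q _ => by ring
        _ = (Iio p).card • ((∑ c, d c) + d p) + ∑ q ∈ Iio p, d q := by
            rw [Finset.sum_add_distrib, Finset.sum_const]
        _ = ((p : ℕ) : ZMod 2) * ((∑ c, d c) + d p) + ∑ q ∈ Iio p, d q := by
            rw [Fin.card_Iio, nsmul_eq_mul]
    rw [sum_congr rfl fun p _ => e1 p, Finset.sum_add_distrib]
    have B : (∑ p : Fin n, ∑ q ∈ Iio p, d q)
        = ∑ q : Fin n, ((n - 1 - (q : ℕ) : ℕ) : ZMod 2) * d q := by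
      rw [swap1 (fun q _ => d q)]
      refine sum_congr rfl fun q _ => ?_
      rw [Finset.sum_const, Fin.card_Ioi, nsmul_eq_mul]
    have C : ∑ p : Fin n, ((p : ℕ) : ZMod 2) * ((∑ c, d c) + d p)
        = (∑ p : Fin n, ((p : ℕ) : ZMod 2)) * (∑ c, d c)
          + ∑ p : Fin n, ((p : ℕ) : ZMod 2) * d p := by
      simp_rw [mul_add]
      rw [Finset.sum_add_distrib, Finset.sum_mul]
    have D : (∑ p : Fin n, ((p : ℕ) : ZMod 2)) = 0 := by
      rw [← Nat.cast_sum]; exact zmod2_cast_zero hvalsum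
    rw [B, C, D, zero_mul, zero_add, ← Finset.sum_add_distrib]
    refine sum_eq_zero fun p _ => ?_
    rw [← add_mul, ← Nat.cast_add]
    have hp : (p : ℕ) + (n - 1 - (p : ℕ)) = n - 1 := by have := p.isLt; omega
    rw [hp, zmod2_cast_zero hn2, zero_mul]
  have P2 : (∑ p : Fin n, ∑ q ∈ Iio p, eVec n t q * ((∑ c, d c) + d q + d p))
      = ((n - 1 - (t : ℕ) : ℕ) : ZMod 2) * ((∑ c, d c) + d t) + ∑ p ∈ Ioi t, d p := by
    have e2 : ∀ p : Fin n, ∑ q ∈ Iio p, eVec n t q * ((∑ c, d c) + d q + d p)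
        = if t < p then ((∑ c, d c) + d t + d p) else 0 := by
      intro p
      rw [sum_eVec_mul (Iio p) t (fun q => (∑ c, d c) + d q + d p)]
      simp [mem_Iio]
    rw [sum_congr rfl fun p _ => e2 p]
    rw [show (∑ p : Fin n, if t < p then ((∑ c, d c) + d t + d p) else 0)
        = ∑ p ∈ Ioi t, ((∑ c, d c) + d t + d p) by rw [Ioi_filter, sum_filter]]
    calc ∑ p ∈ Ioi t, ((∑ c, d c) + d t + d p)
        = ∑ p ∈ Ioi t, (((∑ c, d c) + d t) + d p) := sum_congr rfl fun p _ => by ring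
      _ = (Ioi t).card • ((∑ c, d c) + d t) + ∑ p ∈ Ioi t, d p := by
          rw [Finset.sum_add_distrib, Finset.sum_const]
      _ = ((n - 1 - (t : ℕ) : ℕ) : ZMod 2) * ((∑ c, d c) + d t) + ∑ p ∈ Ioi t, d p := by
          rw [Fin.card_Ioi, nsmul_eq_mul]
  have P3 : (∑ p : Fin n, ∑ q ∈ Iio p, eVec n t p * ((∑ c, d c) + d q + d p))
      = ((t : ℕ) : ZMod 2) * ((∑ c, d c) + d t) + ∑ q ∈ Iio t, d q := by
    have e3 : ∀ p : Fin n, ∑ q ∈ Iio p, eVec n t p * ((∑ c, d c) + d q + d p)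
        = eVec n t p * ∑ q ∈ Iio p, ((∑ c, d c) + d q + d p) := by
      intro p; rw [Finset.mul_sum]
    rw [sum_congr rfl fun p _ => e3 p,
      sum_eVec_mul univ t (fun p => ∑ q ∈ Iio p, ((∑ c, d c) + d q + d p))]
    rw [if_pos (mem_univ t)]
    calc ∑ q ∈ Iio t, ((∑ c, d c) + d q + d t)
        = ∑ q ∈ Iio t, (((∑ c, d c) + d t) + d q) := sum_congr rfl fun q _ => by ring
      _ = (Iio t).card • ((∑ c, d c) + d t) + ∑ q ∈ Iio t, d q := by
          rw [Finset.sum_add_distrib, Finset.sum_const]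
      _ = ((t : ℕ) : ZMod 2) * ((∑ c, d c) + d t) + ∑ q ∈ Iio t, d q := by
          rw [Fin.card_Iio, nsmul_eq_mul]
  have split : (∑ p : Fin n, ∑ q ∈ Iio p, ((∑ c, d c) + d q + d p))
      + ((∑ p : Fin n, ∑ q ∈ Iio p, eVec n t q * ((∑ c, d c) + d q + d p))
        + (∑ p : Fin n, ∑ q ∈ Iio p, eVec n t p * ((∑ c, d c) + d q + d p)))
      = ∑ p : Fin n, ∑ q ∈ Iio p, (((∑ c, d c) + d q + d p)
          + (eVec n t q * ((∑ c, d c) + d q + d p)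
            + eVec n t p * ((∑ c, d c) + d q + d p))) := by
    rw [← Finset.sum_add_distrib, ← Finset.sum_add_distrib]
    refine sum_congr rfl fun p _ => ?_
    rw [← Finset.sum_add_distrib, ← Finset.sum_add_distrib]
  rw [← split, P1, P2, P3, zero_add]
  have comb : ((n - 1 - (t : ℕ) : ℕ) : ZMod 2) * ((∑ c, d c) + d t)
      + ((t : ℕ) : ZMod 2) * ((∑ c, d c) + d t) = 0 := by
    rw [← add_mul, ← Nat.cast_add]
    have hp : (n - 1 - (t : ℕ)) + (t : ℕ) = n - 1 := by have := t.isLt; omega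
    rw [hp, zmod2_cast_zero hn2, zero_mul]
  calc (((n - 1 - (t : ℕ) : ℕ) : ZMod 2) * ((∑ c, d c) + d t) + ∑ p ∈ Ioi t, d p)
        + (((t : ℕ) : ZMod 2) * ((∑ c, d c) + d t) + ∑ q ∈ Iio t, d q)
      = (((n - 1 - (t : ℕ) : ℕ) : ZMod 2) * ((∑ c, d c) + d t)
          + ((t : ℕ) : ZMod 2) * ((∑ c, d c) + d t))
        + (∑ q ∈ Iio t, d q + ∑ p ∈ Ioi t, d p) := by ring
    _ = (∑ c, d c) + d t := by rw [comb, zero_add, sum_Iio_Ioi]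

lemma quad_eVec (t : Fin n) (d : Fin n → ZMod 2) :
    quad n (eVec n t) d = ∑ j ∈ Ici t, d j := by
  unfold quad
  have e : ∀ j : Fin n, ∑ i ∈ Iic j, eVec n t i * d j = if t ≤ j then d j else 0 := by
    intro j
    rw [sum_eVec_mul (Iic j) t (fun _ => d j)]
    simp [mem_Iic]
  rw [sum_congr rfl fun j _ => e j, Ici_filter, sum_filter]

lemma quad_eBar (t : Fin n) (d : Fin n → ZMod 2) :
    quad n (eBarVec n t) d
      = (∑ j : Fin n, (((j : ℕ) + 1 : ℕ) : ZMod 2) * d j) + ∑ j ∈ Ici t, d j := by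
  unfold quad
  have e : ∀ j : Fin n, ∑ i ∈ Iic j, eBarVec n t i * d j
      = (((j : ℕ) + 1 : ℕ) : ZMod 2) * d j + (if t ≤ j then d j else 0) := by
    intro j
    have h1 : ∀ i, eBarVec n t i * d j = d j + eVec n t i * d j := fun i => by
      rw [eBar_apply]; ring
    rw [sum_congr rfl fun i _ => h1 i, Finset.sum_add_distrib, Finset.sum_const,
      Fin.card_Iic, nsmul_eq_mul, sum_eVec_mul (Iic j) t (fun _ => d j)]
    simp only [mem_Iic]
  rw [sum_congr rfl fun j _ => e j, Finset.sum_add_distrib]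
  congr 1
  rw [Ici_filter, sum_filter]

lemma fO_eVec (t : Fin n) (d : Fin n → ZMod 2) :
    fO n (eVec n t) d = ∑ j ∈ Ici t, d j := by
  rw [fO_eq, cub_eVec, quad_eVec, zero_add]

lemma fO_eBar (hn : n % 4 = 1) (t : Fin n) (d : Fin n → ZMod 2) :
    fO n (eBarVec n t) d
      = ((∑ c, d c) + d t)
        + ((∑ j : Fin n, (((j : ℕ) + 1 : ℕ) : ZMod 2) * d j) + ∑ j ∈ Ici t, d j) := by
  rw [fO_eq, cub_eBar hn, quad_eBar]

lemma sum_eVec_pair (s : Finset (Fin n)) (i j : Fin n) :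
    ∑ k ∈ s, (eVec n i + eVec n j) k
      = (if i ∈ s then (1 : ZMod 2) else 0) + (if j ∈ s then 1 else 0) := by
  simp only [Pi.add_apply]
  rw [Finset.sum_add_distrib, sum_eVec, sum_eVec]

lemma Rpair {i j : Fin n} (hij : i ≠ j) :
    (∑ k ∈ Ici i, (eVec n i + eVec n j) k) + (∑ k ∈ Ici j, (eVec n i + eVec n j) k) = 1 := by
  rw [sum_eVec_pair, sum_eVec_pair]
  simp only [mem_Ici, le_refl, if_true]
  rcases lt_or_gt_of_ne hij with h | h
  · rw [if_pos h.le, if_neg (not_le.mpr h)]; decide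
  · rw [if_neg (not_le.mpr h), if_pos h.le]; decide

lemma kcl_ee {i j : Fin n} (hij : i ≠ j) :
    fO n (eVec n i) (eVec n i + eVec n j) + fO n (eVec n j) (eVec n i + eVec n j) = 1 := by
  rw [fO_eVec, fO_eVec]
  exact Rpair hij

lemma ebar_add_ebar (i j : Fin n) :
    eBarVec n i + eBarVec n j = eVec n i + eVec n j := by
  funext k
  simp only [Pi.add_apply, eBar_apply]
  have h2 : (2 : ZMod 2) = 0 := rfl
  linear_combination h2

lemma kcl_bb (hn : n % 4 = 1) {i j : Fin n} (hij : i ≠ j) :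
    fO n (eBarVec n i) (eBarVec n i + eBarVec n j)
      + fO n (eBarVec n j) (eBarVec n i + eBarVec n j) = 1 := by
  rw [ebar_add_ebar, fO_eBar hn, fO_eBar hn]
  have h1 := Rpair hij (n := n)
  have h2 : (eVec n i + eVec n j) i = 1 := by
    simp [eVec, Pi.add_apply, hij]
  have h3 : (eVec n i + eVec n j) j = 1 := by
    simp [eVec, Pi.add_apply, hij.symm]
  have h4 := zmod2_add_self (∑ c, (eVec n i + eVec n j) c)
  have h5 := zmod2_add_self
    (∑ k : Fin n, (((k : ℕ) + 1 : ℕ) : ZMod 2) * (eVec n i + eVec n j) k)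
  have htwo : (2 : ZMod 2) = 0 := rfl
  linear_combination h1 + h2 + h3 + h4 + h5 + htwo

lemma sum_range_succ_odd (hn : n % 4 = 1) : (∑ k ∈ range n, (k + 1)) % 2 = 1 := by
  have h0 : (∑ i ∈ range (n + 1), i) = (∑ k ∈ range n, (k + 1)) + 0 :=
    Finset.sum_range_succ' (fun i => i) n
  have h1 : (∑ i ∈ range (n + 1), i) * 2 = (n + 1) * n := Finset.sum_range_id_mul_two (n + 1)
  obtain ⟨m, hm⟩ : ∃ m, n = 4 * m + 1 := ⟨n / 4, by omega⟩
  obtain ⟨K, hK⟩ : ∃ K, (n + 1) * n = 2 * (2 * K + 1) :=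
    ⟨4 * m * m + 3 * m, by subst hm; ring⟩
  omega

lemma kcl_eb (hn : n % 4 = 1) (i j : Fin n) :
    fO n (eVec n i) (eVec n i + eBarVec n j)
      + fO n (eBarVec n j) (eVec n i + eBarVec n j) = 1 := by
  have happ : ∀ k, (eVec n i + eBarVec n j) k = 1 + (eVec n i k + eVec n j k) := by
    intro k; rw [Pi.add_apply, eBar_apply]; ring
  have hS : ∑ c, (eVec n i + eBarVec n j) c = ((n : ℕ) : ZMod 2) + (1 + 1) := by
    rw [sum_congr rfl fun c _ => happ c, Finset.sum_add_distrib, Finset.sum_const,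
      Finset.sum_add_distrib, sum_eVec, sum_eVec, if_pos (mem_univ i), if_pos (mem_univ j),
      card_univ, Fintype.card_fin, nsmul_eq_mul, mul_one]
  have hR : ∀ t : Fin n, ∑ k ∈ Ici t, (eVec n i + eBarVec n j) k
      = ((n - (t : ℕ) : ℕ) : ZMod 2)
        + ((if t ≤ i then (1 : ZMod 2) else 0) + (if t ≤ j then 1 else 0)) := by
    intro t
    rw [sum_congr rfl fun k _ => happ k, Finset.sum_add_distrib, Finset.sum_const,
      Finset.sum_add_distrib, sum_eVec, sum_eVec, Fin.card_Ici, nsmul_eq_mul, mul_one]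
    simp only [mem_Ici]
  have hdj : (eVec n i + eBarVec n j) j
      = 1 + ((if j = i then (1 : ZMod 2) else 0) + 1) := by
    rw [happ j]; simp [eVec]
  have hW : ∑ k : Fin n, (((k : ℕ) + 1 : ℕ) : ZMod 2) * (eVec n i + eBarVec n j) k
      = ((∑ k ∈ range n, (k + 1) : ℕ) : ZMod 2)
        + ((((i : ℕ) + 1 : ℕ) : ZMod 2) + (((j : ℕ) + 1 : ℕ) : ZMod 2)) := by
    have e : ∀ k : Fin n, (((k : ℕ) + 1 : ℕ) : ZMod 2) * (eVec n i + eBarVec n j) k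
        = (((k : ℕ) + 1 : ℕ) : ZMod 2)
          + (eVec n i k * (((k : ℕ) + 1 : ℕ) : ZMod 2)
            + eVec n j k * (((k : ℕ) + 1 : ℕ) : ZMod 2)) := by
      intro k; rw [happ k]; ring
    rw [sum_congr rfl fun k _ => e k, Finset.sum_add_distrib, Finset.sum_add_distrib,
      sum_eVec_mul univ i (fun k => (((k : ℕ) + 1 : ℕ) : ZMod 2)),
      sum_eVec_mul univ j (fun k => (((k : ℕ) + 1 : ℕ) : ZMod 2)),
      if_pos (mem_univ i), if_pos (mem_univ j)]
    congr 1
    rw [← Fin.sum_univ_eq_sum_range (fun k => k + 1) n, Nat.cast_sum]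
  rw [fO_eVec, fO_eBar hn, hR i, hR j, hS, hW, hdj]
  have hsodd := sum_range_succ_odd hn
  have hi := i.isLt
  have hj := j.isLt
  rcases lt_trichotomy i j with h | h | h
  · have hvij : (i : ℕ) < (j : ℕ) := h
    rw [if_pos (le_refl i), if_pos h.le, if_neg (not_le.mpr h), if_pos (le_refl j),
      if_neg (ne_of_gt h)]
    refine Eq.trans (b := ((((n - (i : ℕ)) + (n - (j : ℕ)) + n
      + (∑ k ∈ range n, (k + 1)) + ((i : ℕ) + 1) + ((j : ℕ) + 1) + 7 : ℕ)) : ZMod 2)) ?_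
      (zmod2_cast_one (by omega))
    push_cast
    ring
  · subst h
    rw [if_pos (le_refl i), if_pos rfl]
    refine Eq.trans (b := ((((n - (i : ℕ)) + (n - (i : ℕ)) + n
      + (∑ k ∈ range n, (k + 1)) + ((i : ℕ) + 1) + ((i : ℕ) + 1) + 9 : ℕ)) : ZMod 2)) ?_
      (zmod2_cast_one (by omega))
    push_cast
    ring
  · have hvji : (j : ℕ) < (i : ℕ) := h
    rw [if_pos (le_refl i), if_neg (not_le.mpr h), if_pos h.le, if_pos (le_refl j),
      if_neg (ne_of_lt h)]
    refine Eq.trans (b := ((((n - (i : ℕ)) + (n - (j : ℕ)) + n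
      + (∑ k ∈ range n, (k + 1)) + ((i : ℕ) + 1) + ((j : ℕ) + 1) + 7 : ℕ)) : ZMod 2)) ?_
      (zmod2_cast_one (by omega))
    push_cast
    ring

lemma fO_add_right (x y y' : Fin n → ZMod 2) :
    fO n x (y + y') = fO n x y + fO n x y' := by
  unfold fO
  simp only [Pi.add_apply, mul_add, add_mul, Finset.sum_add_distrib]
  ring

lemma pi_add_self (v : Fin n → ZMod 2) : v + v = 0 := by
  funext k; exact zmod2_add_self (v k)

lemma kcl (hn : n % 4 = 1) {x x' : Fin n → ZMod 2}
    (hx : x ∈ (univ.image (eVec n)) ∪ (univ.image (eBarVec n)))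
    (hx' : x' ∈ (univ.image (eVec n)) ∪ (univ.image (eBarVec n)))
    (hne : x ≠ x') :
    fO n x (x + x') + fO n x' (x + x') = 1 := by
  simp only [mem_union, mem_image, mem_univ, true_and] at hx hx'
  rcases hx with ⟨i, rfl⟩ | ⟨i, rfl⟩ <;> rcases hx' with ⟨j, rfl⟩ | ⟨j, rfl⟩
  · exact kcl_ee (fun h => hne (by rw [h]))
  · exact kcl_eb hn i j
  · rw [add_comm (eBarVec n i) (eVec n j), add_comm]
    exact kcl_eb hn j i
  · exact kcl_bb hn (fun h => hne (by rw [h]))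

lemma key_sign (hn : n % 4 = 1) {x x' : Fin n → ZMod 2}
    (hx : x ∈ (univ.image (eVec n)) ∪ (univ.image (eBarVec n)))
    (hx' : x' ∈ (univ.image (eVec n)) ∪ (univ.image (eBarVec n)))
    (hne : x ≠ x') (y y' : Fin n → ZMod 2) (hcond : x' + y' = x + y) :
    sgn (fO n x y') * sgn (fO n x' y) = -(sgn (fO n x y) * sgn (fO n x' y')) := by
  have hyy : y + y' = x + x' := by
    linear_combination hcond + pi_add_self y - pi_add_self x'
  have hxy' : fO n x y' = fO n x y + fO n x (x + x') := by
    have h := fO_add_right x y (y + y')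
    rw [show y + (y + y') = y' from by rw [← add_assoc, pi_add_self y, zero_add]] at h
    rw [h, hyy]
  have hx'y : fO n x' y = fO n x' y' + fO n x' (x + x') := by
    have h := fO_add_right x' y' (y' + y)
    rw [show y' + (y' + y) = y from by rw [← add_assoc, pi_add_self y', zero_add]] at h
    rw [h, show y' + y = x + x' from by rw [add_comm]; exact hyy]
  rw [sgn_mul_sgn, hxy', hx'y]
  have hk : fO n x (x + x') + fO n x' (x + x') = 1 := kcl hn hx hx' hne
  have hsum : (fO n x y + fO n x (x + x')) + (fO n x' y' + fO n x' (x + x'))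
      = (fO n x y + fO n x' y') + 1 := by linear_combination hk
  rw [hsum, sgn_add_one, sgn_mul_sgn]

def Gfun (n : ℕ) (a b : (Fin n → ZMod 2) → ℝ) (x x' : Fin n → ZMod 2) : ℝ :=
  ∑ y : Fin n → ZMod 2, ∑ y' : Fin n → ZMod 2,
    if x' + y' = x + y then
      (sgn (fO n x y) * a x * b y) * (sgn (fO n x' y') * a x' * b y') else 0

lemma Gdiag (a b : (Fin n → ZMod 2) → ℝ) (x : Fin n → ZMod 2) :
    Gfun n a b x x = a x ^ 2 * ∑ y : Fin n → ZMod 2, b y ^ 2 := by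
  unfold Gfun
  have e1 : ∀ y : Fin n → ZMod 2,
      (∑ y' : Fin n → ZMod 2, if x + y' = x + y then
        (sgn (fO n x y) * a x * b y) * (sgn (fO n x y') * a x * b y') else 0)
      = a x ^ 2 * b y ^ 2 := by
    intro y
    have e2 : ∀ y' : Fin n → ZMod 2, (if x + y' = x + y then
        (sgn (fO n x y) * a x * b y) * (sgn (fO n x y') * a x * b y') else 0)
        = if y' = y then
          (sgn (fO n x y) * a x * b y) * (sgn (fO n x y') * a x * b y') else 0 := by
      intro y'; simp only [add_right_inj]
    rw [sum_congr rfl fun y' _ => e2 y',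
      Finset.sum_ite_eq' univ y
        (fun y' => (sgn (fO n x y) * a x * b y) * (sgn (fO n x y') * a x * b y')),
      if_pos (mem_univ y)]
    have hs := sgn_sq (fO n x y)
    calc (sgn (fO n x y) * a x * b y) * (sgn (fO n x y) * a x * b y)
        = (sgn (fO n x y) * sgn (fO n x y)) * (a x ^ 2 * b y ^ 2) := by ring
      _ = a x ^ 2 * b y ^ 2 := by rw [hs, one_mul]
  rw [sum_congr rfl fun y _ => e1 y, ← Finset.mul_sum]

lemma Goff (hn : n % 4 = 1) (a b : (Fin n → ZMod 2) → ℝ) {x x' : Fin n → ZMod 2}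
    (hx : x ∈ (univ.image (eVec n)) ∪ (univ.image (eBarVec n)))
    (hx' : x' ∈ (univ.image (eVec n)) ∪ (univ.image (eBarVec n)))
    (hne : x ≠ x') :
    Gfun n a b x x' = 0 := by
  have hswap : Gfun n a b x x'
      = ∑ y : Fin n → ZMod 2, ∑ y' : Fin n → ZMod 2,
          if x' + y = x + y' then
            (sgn (fO n x y') * a x * b y') * (sgn (fO n x' y) * a x' * b y) else 0 :=
    Finset.sum_comm
  have hpt : ∀ y y' : Fin n → ZMod 2,
      (if x' + y = x + y' then
        (sgn (fO n x y') * a x * b y') * (sgn (fO n x' y) * a x' * b y) else 0)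
      = -(if x' + y' = x + y then
          (sgn (fO n x y) * a x * b y) * (sgn (fO n x' y') * a x' * b y') else 0) := by
    intro y y'
    by_cases hc : x' + y' = x + y
    · have hc2 : x' + y = x + y' := by
        linear_combination hc + pi_add_self y - pi_add_self y'
      rw [if_pos hc, if_pos hc2]
      have hsgn := key_sign hn hx hx' hne y y' hc
      calc (sgn (fO n x y') * a x * b y') * (sgn (fO n x' y) * a x' * b y)
          = (sgn (fO n x y') * sgn (fO n x' y)) * (a x * a x' * b y * b y') := by ring
        _ = (-(sgn (fO n x y) * sgn (fO n x' y'))) * (a x * a x' * b y * b y') := by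
            rw [hsgn]
        _ = -((sgn (fO n x y) * a x * b y) * (sgn (fO n x' y') * a x' * b y')) := by ring
    · have hc2 : ¬ (x' + y = x + y') := fun h =>
        hc (by linear_combination h + pi_add_self y' - pi_add_self y)
      rw [if_neg hc, if_neg hc2, neg_zero]
  have hneg : Gfun n a b x x' = -Gfun n a b x x' := by
    calc Gfun n a b x x'
        = ∑ y : Fin n → ZMod 2, ∑ y' : Fin n → ZMod 2,
            -(if x' + y' = x + y then
              (sgn (fO n x y) * a x * b y) * (sgn (fO n x' y') * a x' * b y') else 0) :=
          hswap.trans (sum_congr rfl fun y _ => sum_congr rfl fun y' _ => hpt y y')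
      _ = -Gfun n a b x x' := by
          unfold Gfun
          rw [← Finset.sum_neg_distrib]
          exact sum_congr rfl fun y _ => by rw [← Finset.sum_neg_distrib]
  linarith

lemma mult_main (hn : n % 4 = 1) (a b : (Fin n → ZMod 2) → ℝ) :
    (∑ x ∈ (univ.image (eVec n)) ∪ (univ.image (eBarVec n)), a x ^ 2)
      * (∑ y : Fin n → ZMod 2, b y ^ 2)
    = ∑ z : Fin n → ZMod 2,
        (∑ x ∈ (univ.image (eVec n)) ∪ (univ.image (eBarVec n)),
          ∑ y : Fin n → ZMod 2,
            if x + y = z then sgn (fO n x y) * a x * b y else 0) ^ 2 := by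
  have step1 : ∀ z : Fin n → ZMod 2,
      (∑ x ∈ (univ.image (eVec n)) ∪ (univ.image (eBarVec n)),
        ∑ y : Fin n → ZMod 2, if x + y = z then sgn (fO n x y) * a x * b y else 0) ^ 2
      = ∑ x ∈ (univ.image (eVec n)) ∪ (univ.image (eBarVec n)),
          ∑ x' ∈ (univ.image (eVec n)) ∪ (univ.image (eBarVec n)),
            ∑ y : Fin n → ZMod 2, ∑ y' : Fin n → ZMod 2,
              (if x + y = z then sgn (fO n x y) * a x * b y else 0)
                * (if x' + y' = z then sgn (fO n x' y') * a x' * b y' else 0) := by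
    intro z
    rw [sq, Finset.sum_mul_sum]
    exact sum_congr rfl fun x _ => sum_congr rfl fun x' _ => by rw [Finset.sum_mul_sum]
  rw [sum_congr rfl fun z _ => step1 z]
  rw [Finset.sum_comm]
  have step2 : ∀ x ∈ (univ.image (eVec n)) ∪ (univ.image (eBarVec n)),
      (∑ z : Fin n → ZMod 2,
        ∑ x' ∈ (univ.image (eVec n)) ∪ (univ.image (eBarVec n)),
          ∑ y : Fin n → ZMod 2, ∑ y' : Fin n → ZMod 2,
            (if x + y = z then sgn (fO n x y) * a x * b y else 0)
              * (if x' + y' = z then sgn (fO n x' y') * a x' * b y' else 0))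
      = ∑ x' ∈ (univ.image (eVec n)) ∪ (univ.image (eBarVec n)), Gfun n a b x x' := by
    intro x _
    rw [Finset.sum_comm]
    refine sum_congr rfl fun x' _ => ?_
    rw [Finset.sum_comm]
    refine sum_congr rfl fun y _ => ?_
    rw [Finset.sum_comm]
    refine sum_congr rfl fun y' _ => ?_
    have hz : ∀ z : Fin n → ZMod 2,
        (if x + y = z then sgn (fO n x y) * a x * b y else 0)
          * (if x' + y' = z then sgn (fO n x' y') * a x' * b y' else 0)
        = if z = x + y then (if x' + y' = x + y then
            (sgn (fO n x y) * a x * b y) * (sgn (fO n x' y') * a x' * b y') else 0)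
          else 0 := by
      intro z
      by_cases h1 : x + y = z
      · subst h1
        by_cases h2 : x' + y' = x + y
        · simp [h2]
        · simp [h2]
      · rw [if_neg h1, zero_mul, if_neg (fun hz => h1 hz.symm)]
    rw [sum_congr rfl fun z _ => hz z,
      Finset.sum_ite_eq' univ (x + y)
        (fun _ => if x' + y' = x + y then
          (sgn (fO n x y) * a x * b y) * (sgn (fO n x' y') * a x' * b y') else 0),
      if_pos (mem_univ _)]
  rw [sum_congr rfl step2]
  have step3 : ∀ x ∈ (univ.image (eVec n)) ∪ (univ.image (eBarVec n)),
      (∑ x' ∈ (univ.image (eVec n)) ∪ (univ.image (eBarVec n)), Gfun n a b x x')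
        = a x ^ 2 * ∑ y : Fin n → ZMod 2, b y ^ 2 := by
    intro x hx
    rw [← Finset.add_sum_erase _ (Gfun n a b x) hx]
    have hz : ∑ x' ∈ ((univ.image (eVec n)) ∪ (univ.image (eBarVec n))).erase x,
        Gfun n a b x x' = 0 := by
      refine sum_eq_zero fun x' hx' => ?_
      have h1 := Finset.mem_of_mem_erase hx'
      have h2 := Finset.ne_of_mem_erase hx'
      exact Goff hn a b hx h1 (Ne.symm h2)
    rw [hz, add_zero, Gdiag]
  rw [sum_congr rfl step3, ← Finset.sum_mul]

/-- For `n ≡ 1 (mod 4)`, the set `H = {e_i} ∪ {ē_i}` has cardinality `2n` and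
`(H, (ℤ/2ℤ)^n)` is a multiplicative pair for `f_O`. -/
theorem hurwitzian_set_one_mod_four (n : ℕ) (hn : n % 4 = 1) :
    ((Finset.univ.image (eVec n)) ∪ (Finset.univ.image (eBarVec n))).card = 2 * n ∧
    IsMultiplicativePair n (fO n)
      ((Finset.univ.image (eVec n)) ∪ (Finset.univ.image (eBarVec n)))
      Finset.univ := by
  have hodd : n % 2 = 1 := by omega
  constructor
  · have einj : Function.Injective (eVec n) := by
      intro i j h
      by_contra hne
      have hc := congrFun h j
      simp only [eVec, if_pos rfl] at hc
      rw [if_neg (Ne.symm hne)] at hc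
      exact absurd hc (by decide)
    have binj : Function.Injective (eBarVec n) := by
      intro i j h
      by_contra hne
      have hc := congrFun h j
      simp only [eBarVec, if_pos rfl] at hc
      rw [if_neg (Ne.symm hne)] at hc
      exact absurd hc (by decide)
    have hsum1 : ∀ i, ∑ k, eVec n i k = (1 : ZMod 2) := by
      intro i; rw [sum_eVec]; simp
    have hsum2 : ∀ j, ∑ k, eBarVec n j k = (0 : ZMod 2) := by
      intro j
      rw [sum_congr rfl fun k _ => eBar_apply j k, Finset.sum_add_distrib, sum_eVec,
        Finset.sum_const, card_univ, Fintype.card_fin, nsmul_eq_mul, mul_one,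
        if_pos (mem_univ j), zmod2_cast_one hodd]
      decide
    have hdisj : Disjoint (univ.image (eVec n)) (univ.image (eBarVec n)) := by
      rw [Finset.disjoint_left]
      intro v hv hv'
      simp only [mem_image, mem_univ, true_and] at hv hv'
      obtain ⟨i, rfl⟩ := hv
      obtain ⟨j, hj⟩ := hv'
      have h1 := hsum1 i
      have h2 := hsum2 j
      rw [hj, h1] at h2
      exact absurd h2 (by decide)
    rw [Finset.card_union_of_disjoint hdisj, Finset.card_image_of_injective _ einj,
      Finset.card_image_of_injective _ binj, card_univ, Fintype.card_fin]
    omega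
  · intro a b
    exact mult_main hn a b
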